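/- arXiv:2110.14262 — 2 statements merged into one kernel-verified Lean document; each statement's English description precedes it below -/
import Mathlib

section
/- Let T : U → L(ℝ³,ℝ³) be a smooth operator-valued field satisfying P T P = T. Then the surface divergence satisfies div_Γ T = T^{αβ}_{~|α} g_β + T^{αβ} b_{αβ} g₃. -/
noncomputable section

open scoped BigOperators Matrix

abbrev V3 := Fin 3 → ℝ
abbrev V2 := Fin 2 → ℝ

/-- Euclidean dot product on `ℝ³`. -/
def dot3 (a b : V3) : ℝ := ∑ i, a i * b i

/-- Euclidean norm on `ℝ³`. -/
def norm3 (a : V3) : ℝ := Real.sqrt (dot3 a a)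

/-- Partial derivative `∂_α` of a field on (part of) `ℝ²`. -/
def pd2 {E : Type*} [NormedAddCommGroup E] [NormedSpace ℝ E]
    (f : V2 → E) (α : Fin 2) (ξ : V2) : E :=
  fderiv ℝ f ξ (Pi.single α 1)

/-- Partial derivative `∂_i` of a field on (part of) `ℝ³`. -/
def pd3 {E : Type*} [NormedAddCommGroup E] [NormedSpace ℝ E]
    (f : V3 → E) (i : Fin 3) (q : V3) : E :=
  fderiv ℝ f q (Pi.single i 1)

/-- Covariant tangent basis `g_α = ∂_α R`. -/
def gcov (R : V2 → V3) (α : Fin 2) (ξ : V2) : V3 := pd2 R α ξ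

/-- Metric tensor `g_{αβ}`. -/
def gmat (R : V2 → V3) (ξ : V2) : Matrix (Fin 2) (Fin 2) ℝ :=
  Matrix.of fun α β => dot3 (gcov R α ξ) (gcov R β ξ)

/-- Inverse metric `g^{αβ}`. -/
def ginv (R : V2 → V3) (ξ : V2) : Matrix (Fin 2) (Fin 2) ℝ := (gmat R ξ)⁻¹

/-- Contravariant basis `g^α = g^{αβ} g_β`. -/
def gcon (R : V2 → V3) (α : Fin 2) (ξ : V2) : V3 :=
  ∑ β, ginv R ξ α β • gcov R β ξ

/-- Unit normal `n = (g₁ × g₂)/‖g₁ × g₂‖`. -/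
def nrm (R : V2 → V3) (ξ : V2) : V3 :=
  (norm3 (crossProduct (gcov R 0 ξ) (gcov R 1 ξ)))⁻¹ •
    crossProduct (gcov R 0 ξ) (gcov R 1 ξ)

/-- Tangential projection `P = I - n nᵀ`. -/
def Pmat (R : V2 → V3) (ξ : V2) : Matrix (Fin 3) (Fin 3) ℝ :=
  1 - Matrix.of fun i j => nrm R ξ i * nrm R ξ j

/-- Christoffel symbols `Γ^σ_{αβ} = g^σ · ∂_α g_β`. -/
def chris (R : V2 → V3) (σ α β : Fin 2) (ξ : V2) : ℝ :=
  dot3 (gcon R σ ξ) (pd2 (gcov R β) α ξ)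

/-- Second fundamental form `b_{αβ} = n · ∂_α g_β`. -/
def bcov (R : V2 → V3) (α β : Fin 2) (ξ : V2) : ℝ :=
  dot3 (nrm R ξ) (pd2 (gcov R β) α ξ)

/-- Mixed components `b^β_α = g^{βσ} b_{σα}`. -/
def bmix (R : V2 → V3) (β α : Fin 2) (ξ : V2) : ℝ :=
  ∑ σ, ginv R ξ β σ * bcov R σ α ξ

/-- Outer product `(a ⊗ b) w = (b·w) a` as a matrix. -/
def outer (a b : V3) : Matrix (Fin 3) (Fin 3) ℝ := Matrix.of fun i j => a i * b j

/-- Shape operator `B = b_{αβ} (g^α ⊗ g^β)`. -/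
def shapeOp (R : V2 → V3) (ξ : V2) : Matrix (Fin 3) (Fin 3) ℝ :=
  ∑ α, ∑ β, bcov R α β ξ • outer (gcon R α ξ) (gcon R β ξ)

/-- Cartesian (Euclidean) gradient of a scalar field on `ℝ³`. -/
def grad3 (f : V3 → ℝ) (y : V3) : V3 := fun i => fderiv ℝ f y (Pi.single i 1)

/-- Cartesian Jacobian `(∇̂ u)_{ij} = ∂_j u_i` of a vector field on `ℝ³`. -/
def jac3 (u : V3 → V3) (y : V3) : Matrix (Fin 3) (Fin 3) ℝ :=
  Matrix.of fun i j => fderiv ℝ u y (Pi.single j 1) i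

/-- Surface gradient `∇_Γ φ = (∂_α φ) g^α` (curvilinear definition). -/
def gradGamma (R : V2 → V3) (φ : V2 → ℝ) (ξ : V2) : V3 :=
  ∑ α, pd2 φ α ξ • gcon R α ξ

/-- Covariant derivative `∇_Γ u = (P ∂_α u) ⊗ g^α` (curvilinear definition). -/
def covDer (R : V2 → V3) (u : V2 → V3) (ξ : V2) : Matrix (Fin 3) (Fin 3) ℝ :=
  ∑ α, outer ((Pmat R ξ).mulVec (pd2 u α ξ)) (gcon R α ξ)

/-- Surface divergence `div_Γ u = ∂_α u · g^α` (curvilinear definition). -/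
def divGamma (R : V2 → V3) (u : V2 → V3) (ξ : V2) : ℝ :=
  ∑ α, dot3 (pd2 u α ξ) (gcon R α ξ)

/-- Entrywise partial derivative `∂_γ T` of a matrix-valued field. -/
def pdMat (T : V2 → Matrix (Fin 3) (Fin 3) ℝ) (γ : Fin 2) (ξ : V2) :
    Matrix (Fin 3) (Fin 3) ℝ :=
  Matrix.of fun i j => pd2 (fun ξ' => T ξ' i j) γ ξ

/-- Surface divergence `div_Γ T = (∂_α T)ᵀ g^α` of an operator-valued field. -/
def divGammaMat (R : V2 → V3) (T : V2 → Matrix (Fin 3) (Fin 3) ℝ) (ξ : V2) : V3 :=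
  ∑ α, (pdMat T α ξ)ᵀ.mulVec (gcon R α ξ)

/-- Surface rate-of-strain tensor `E(u) = ½(∇_Γ u + (∇_Γ u)ᵀ)`. -/
def strain (R : V2 → V3) (u : V2 → V3) (ξ : V2) : Matrix (Fin 3) (Fin 3) ℝ :=
  (1/2 : ℝ) • (covDer R u ξ + (covDer R u ξ)ᵀ)

/-- The first two coordinates of a point of `ℝ³`. -/
def emb2 (q : V3) : V2 := fun α => q α.castSucc

/-- Thin-film parametrization `R̃(ξ,ζ) = R(ξ) + ζ n(ξ)`. -/
def Rtilde (R : V2 → V3) (q : V3) : V3 := R (emb2 q) + q 2 • nrm R (emb2 q)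

/-- Thin-film covariant basis `G_i = ∂_i R̃`. -/
def Gcov (R : V2 → V3) (i : Fin 3) (q : V3) : V3 := pd3 (Rtilde R) i q

/-- Thin-film metric `G_{ij} = G_i · G_j`. -/
def Gmat (R : V2 → V3) (q : V3) : Matrix (Fin 3) (Fin 3) ℝ :=
  Matrix.of fun i j => dot3 (Gcov R i q) (Gcov R j q)

/-- Thin-film inverse metric `G^{ij}`. -/
def Ginv (R : V2 → V3) (q : V3) : Matrix (Fin 3) (Fin 3) ℝ := (Gmat R q)⁻¹

/-- Thin-film Christoffel symbols
`Γ̄^k_{ij} = ½ G^{kl}(∂_i G_{jl} + ∂_j G_{il} − ∂_l G_{ij})`. -/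
def chrisT (R : V2 → V3) (k i j : Fin 3) (q : V3) : ℝ :=
  (1/2 : ℝ) * ∑ l, Ginv R q k l *
    (pd3 (fun q' => Gmat R q' j l) i q + pd3 (fun q' => Gmat R q' i l) j q
      - pd3 (fun q' => Gmat R q' i j) l q)

section Helpers

open Matrix

lemma dot3_eq_dotProduct (a b : V3) : dot3 a b = a ⬝ᵥ b := rfl

lemma dot3_comm (a b : V3) : dot3 a b = dot3 b a := by
  unfold dot3; exact Finset.sum_congr rfl fun i _ => mul_comm _ _

lemma dot3_self_nonneg (v : V3) : 0 ≤ dot3 v v :=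
  Finset.sum_nonneg fun i _ => mul_self_nonneg _

lemma dot3_self_pos {v : V3} (hv : v ≠ 0) : 0 < dot3 v v := by
  rcases (dot3_self_nonneg v).eq_or_lt with h | h
  · exfalso; apply hv; funext i
    have h0 := (Finset.sum_eq_zero_iff_of_nonneg
      (fun i _ => mul_self_nonneg (v i))).mp h.symm i (Finset.mem_univ i)
    exact mul_self_eq_zero.mp h0
  · exact h

lemma dot3_smul_left (s : ℝ) (v w : V3) : dot3 (s • v) w = s * dot3 v w := by
  unfold dot3; rw [Finset.mul_sum]
  exact Finset.sum_congr rfl fun i _ => by simp [mul_assoc]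

lemma dot3_smul_right (s : ℝ) (v w : V3) : dot3 v (s • w) = s * dot3 v w := by
  rw [dot3_comm, dot3_smul_left, dot3_comm]

lemma dot3_sum_left {ι : Type*} (s : Finset ι) (f : ι → V3) (w : V3) :
    dot3 (∑ i ∈ s, f i) w = ∑ i ∈ s, dot3 (f i) w := by
  simp only [dot3, Finset.sum_apply, Finset.sum_mul]
  exact Finset.sum_comm

lemma dot3_sum_right {ι : Type*} (s : Finset ι) (f : ι → V3) (w : V3) :
    dot3 w (∑ i ∈ s, f i) = ∑ i ∈ s, dot3 w (f i) := by
  rw [dot3_comm, dot3_sum_left]; exact Finset.sum_congr rfl fun i _ => dot3_comm _ _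

/-- cross product of the tangent vectors. -/
def crossg (R : V2 → V3) (ξ : V2) : V3 := crossProduct (gcov R 0 ξ) (gcov R 1 ξ)

section AtPoint

variable {R : V2 → V3} {ξ : V2}

abbrev IndH (R : V2 → V3) (ξ : V2) : Prop := LinearIndependent ℝ ![gcov R 0 ξ, gcov R 1 ξ]

lemma crossg_ne_zero (hInd : IndH R ξ) : crossg R ξ ≠ 0 :=
  crossProduct_ne_zero_iff_linearIndependent.mpr hInd

lemma dot3_crossg_pos (hInd : IndH R ξ) : 0 < dot3 (crossg R ξ) (crossg R ξ) :=
  dot3_self_pos (crossg_ne_zero hInd)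

lemma norm3_crossg_pos (hInd : IndH R ξ) : 0 < norm3 (crossg R ξ) :=
  Real.sqrt_pos.mpr (dot3_crossg_pos hInd)

lemma nrm_eq : nrm R ξ = (norm3 (crossg R ξ))⁻¹ • crossg R ξ := rfl

lemma dot3_nrm_self (hInd : IndH R ξ) : dot3 (nrm R ξ) (nrm R ξ) = 1 := by
  rw [nrm_eq, dot3_smul_left, dot3_smul_right]
  have h := norm3_crossg_pos hInd
  have hs : norm3 (crossg R ξ) * norm3 (crossg R ξ) = dot3 (crossg R ξ) (crossg R ξ) :=
    Real.mul_self_sqrt (le_of_lt (dot3_crossg_pos hInd))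
  rw [← hs]
  field_simp

lemma dot3_crossg_gcov (α : Fin 2) : dot3 (crossg R ξ) (gcov R α ξ) = 0 := by
  rw [dot3_comm, dot3_eq_dotProduct]
  fin_cases α
  · exact dot_self_cross _ _
  · exact dot_cross_self _ _

lemma dot3_nrm_gcov (α : Fin 2) : dot3 (nrm R ξ) (gcov R α ξ) = 0 := by
  rw [nrm_eq, dot3_smul_left, dot3_crossg_gcov, mul_zero]

lemma det_gmat_eq : (gmat R ξ).det = dot3 (crossg R ξ) (crossg R ξ) := by
  rw [Matrix.det_fin_two]
  unfold crossg
  rw [dot3_eq_dotProduct, cross_dot_cross]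
  simp [gmat, dot3_eq_dotProduct]

lemma det_gmat_ne_zero (hInd : IndH R ξ) : (gmat R ξ).det ≠ 0 := by
  rw [det_gmat_eq]; exact ne_of_gt (dot3_crossg_pos hInd)

lemma ginv_mul_gmat (hInd : IndH R ξ) : ginv R ξ * gmat R ξ = 1 :=
  Matrix.nonsing_inv_mul _ (isUnit_iff_ne_zero.mpr (det_gmat_ne_zero hInd))

lemma dot3_gcon_gcov (hInd : IndH R ξ) (α β : Fin 2) :
    dot3 (gcon R α ξ) (gcov R β ξ) = if α = β then 1 else 0 := by
  unfold gcon
  rw [dot3_sum_left]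
  have : ∀ σ, dot3 (ginv R ξ α σ • gcov R σ ξ) (gcov R β ξ)
      = ginv R ξ α σ * gmat R ξ σ β := by
    intro σ; rw [dot3_smul_left]; rfl
  simp_rw [this]
  have h := congrFun (congrFun (ginv_mul_gmat hInd) α) β
  rw [Matrix.mul_apply] at h
  rw [h, Matrix.one_apply]

lemma dot3_nrm_gcon (hInd : IndH R ξ) (α : Fin 2) : dot3 (nrm R ξ) (gcon R α ξ) = 0 := by
  unfold gcon
  rw [dot3_sum_right]
  simp [dot3_smul_right, dot3_nrm_gcov]

end AtPoint
end Helpers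
section Frame
open Matrix
variable {R : V2 → V3} {ξ : V2}

lemma outer_mulVec (a b v : V3) : (outer a b).mulVec v = dot3 b v • a := by
  funext i
  simp only [outer, Matrix.mulVec, dotProduct, Matrix.of_apply, Pi.smul_apply,
    smul_eq_mul, dot3, Finset.mul_sum]
  rw [Finset.sum_mul]
  exact Finset.sum_congr rfl fun j _ => by ring

/-- the matrix with columns `g_1, g_2, n`. -/
def Bmat (R : V2 → V3) (ξ : V2) : Matrix (Fin 3) (Fin 3) ℝ :=
  Matrix.of fun i k => ![gcov R 0 ξ, gcov R 1 ξ, nrm R ξ] k i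

/-- the matrix with rows `g^1, g^2, n`. -/
def Cmat (R : V2 → V3) (ξ : V2) : Matrix (Fin 3) (Fin 3) ℝ :=
  Matrix.of fun k j => ![gcon R 0 ξ, gcon R 1 ξ, nrm R ξ] k j

lemma Cmat_mul_Bmat (hInd : IndH R ξ) : Cmat R ξ * Bmat R ξ = 1 := by
  funext k l
  rw [Matrix.mul_apply, Matrix.one_apply]
  have : ∑ i, Cmat R ξ k i * Bmat R ξ i l
      = dot3 (![gcon R 0 ξ, gcon R 1 ξ, nrm R ξ] k) (![gcov R 0 ξ, gcov R 1 ξ, nrm R ξ] l) := rfl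
  rw [this]
  fin_cases k <;> fin_cases l <;>
    simp [dot3_gcon_gcov hInd, dot3_nrm_gcov, dot3_nrm_gcon hInd, dot3_nrm_self hInd,
      dot3_comm (gcov R _ ξ) (nrm R ξ), dot3_comm (gcon R 0 ξ) (nrm R ξ),
      dot3_comm (gcon R 1 ξ) (nrm R ξ)]

lemma Bmat_mul_Cmat (hInd : IndH R ξ) : Bmat R ξ * Cmat R ξ = 1 :=
  mul_eq_one_comm.mpr (Cmat_mul_Bmat hInd)

lemma sum_mulVec {ι : Type*} (s : Finset ι) (M : ι → Matrix (Fin 3) (Fin 3) ℝ) (v : V3) :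
    (∑ i ∈ s, M i).mulVec v = ∑ i ∈ s, (M i).mulVec v := by
  funext k
  rw [Finset.sum_apply]
  simp only [Matrix.mulVec, dotProduct, Matrix.sum_apply, Finset.sum_mul]
  exact Finset.sum_comm

lemma Pmat_mulVec (v : V3) :
    (Pmat R ξ).mulVec v = v - dot3 (nrm R ξ) v • nrm R ξ := by
  have : Pmat R ξ = 1 - outer (nrm R ξ) (nrm R ξ) := rfl
  rw [this, Matrix.sub_mulVec, Matrix.one_mulVec, outer_mulVec]

lemma Pmat_eq_sum_outer (hInd : IndH R ξ) :
    Pmat R ξ = ∑ α, outer (gcov R α ξ) (gcon R α ξ) := by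
  have hBC := Bmat_mul_Cmat hInd
  funext i j
  have h := congrFun (congrFun hBC i) j
  rw [Matrix.mul_apply, Fin.sum_univ_three, Matrix.one_apply] at h
  simp only [Pmat, Matrix.sub_apply, Matrix.one_apply, Matrix.of_apply,
    Finset.sum_apply, Fin.sum_univ_two, outer, Matrix.sum_apply]
  simp only [Bmat, Cmat, Matrix.of_apply, Matrix.cons_val_zero, Matrix.cons_val_one,
    Matrix.head_cons, Matrix.cons_val_two, Matrix.tail_cons] at h
  rw [← h]
  ring

lemma frame_decomp (hInd : IndH R ξ) (v : V3) :
    v = (∑ σ, dot3 (gcon R σ ξ) v • gcov R σ ξ) + dot3 (nrm R ξ) v • nrm R ξ := by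
  have h2 : (Pmat R ξ).mulVec v = ∑ σ, dot3 (gcon R σ ξ) v • gcov R σ ξ := by
    rw [Pmat_eq_sum_outer hInd, sum_mulVec]
    exact Finset.sum_congr rfl fun σ _ => outer_mulVec _ _ _
  rw [← h2, Pmat_mulVec]
  abel

lemma Pmat_eq_sum_outer' (hInd : IndH R ξ) :
    Pmat R ξ = ∑ α, outer (gcon R α ξ) (gcov R α ξ) := by
  funext i j
  have h := congrFun (congrFun (Pmat_eq_sum_outer hInd) j) i
  simp only [Pmat, Matrix.sub_apply, Matrix.one_apply, Matrix.of_apply, Matrix.sum_apply,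
    outer, Fin.sum_univ_two, Finset.sum_apply] at h ⊢
  rw [show (if i = j then (1:ℝ) else 0) = if j = i then 1 else 0 from by simp [eq_comm]]
  rw [show nrm R ξ i * nrm R ξ j = nrm R ξ j * nrm R ξ i from mul_comm _ _]
  rw [h]; ring

end Frame
section Rep
open Matrix
variable {R : V2 → V3} {ξ : V2}

lemma outer_mul_mul_outer (a b c d : V3) (M : Matrix (Fin 3) (Fin 3) ℝ) :
    outer a b * M * outer c d = dot3 b (M.mulVec c) • outer a d := by
  funext i j
  simp only [outer, Matrix.mul_apply, Matrix.of_apply, Matrix.smul_apply, smul_eq_mul,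
    Matrix.mulVec, dotProduct, dot3, Finset.sum_mul, Finset.mul_sum]
  rw [Finset.sum_comm]
  exact Finset.sum_congr rfl fun l _ => Finset.sum_congr rfl fun k _ => by ring

lemma T_rep (hInd : IndH R ξ) {T : Matrix (Fin 3) (Fin 3) ℝ}
    (hPTP : Pmat R ξ * T * Pmat R ξ = T) :
    T = ∑ μ, ∑ ν, dot3 (gcon R μ ξ) (T.mulVec (gcon R ν ξ)) •
        outer (gcov R μ ξ) (gcov R ν ξ) := by
  conv_lhs => rw [← hPTP]
  conv_lhs => lhs; lhs; rw [Pmat_eq_sum_outer hInd]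
  conv_lhs => rhs; rw [Pmat_eq_sum_outer' hInd]
  rw [Finset.sum_mul, Finset.sum_mul]
  refine Finset.sum_congr rfl fun μ _ => ?_
  rw [Finset.mul_sum]
  refine Finset.sum_congr rfl fun ν _ => ?_
  rw [mul_assoc, ← mul_assoc, outer_mul_mul_outer]

end Rep
section Smooth
open Matrix
variable {R : V2 → V3} {ξ : V2}

lemma gcov_contDiffAt (hRat : ContDiffAt ℝ (⊤ : ℕ∞) R ξ) (α : Fin 2) :
    ContDiffAt ℝ (⊤ : ℕ∞) (gcov R α) ξ :=
  (hRat.fderiv_right (by simp)).clm_apply contDiffAt_const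

lemma gcov_comp_contDiffAt (hRat : ContDiffAt ℝ (⊤ : ℕ∞) R ξ) (α : Fin 2) (i : Fin 3) :
    ContDiffAt ℝ (⊤ : ℕ∞) (fun ξ' => gcov R α ξ' i) ξ :=
  contDiffAt_pi.mp (gcov_contDiffAt hRat α) i

lemma contDiffAt_dot3 {f g : V2 → V3} (hf : ContDiffAt ℝ (⊤ : ℕ∞) f ξ)
    (hg : ContDiffAt ℝ (⊤ : ℕ∞) g ξ) :
    ContDiffAt ℝ (⊤ : ℕ∞) (fun x => dot3 (f x) (g x)) ξ := by
  unfold dot3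
  exact ContDiffAt.sum fun i _ => (contDiffAt_pi.mp hf i).mul (contDiffAt_pi.mp hg i)

lemma gmat_contDiffAt (hRat : ContDiffAt ℝ (⊤ : ℕ∞) R ξ) (α β : Fin 2) :
    ContDiffAt ℝ (⊤ : ℕ∞) (fun ξ' => gmat R ξ' α β) ξ :=
  contDiffAt_dot3 (gcov_contDiffAt hRat α) (gcov_contDiffAt hRat β)

lemma det_gmat_contDiffAt (hRat : ContDiffAt ℝ (⊤ : ℕ∞) R ξ) :
    ContDiffAt ℝ (⊤ : ℕ∞) (fun ξ' => (gmat R ξ').det) ξ := by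
  have : (fun ξ' => (gmat R ξ').det)
      = fun ξ' => gmat R ξ' 0 0 * gmat R ξ' 1 1 - gmat R ξ' 0 1 * gmat R ξ' 1 0 := by
    funext ξ'; rw [Matrix.det_fin_two]
  rw [this]
  exact ((gmat_contDiffAt hRat 0 0).mul (gmat_contDiffAt hRat 1 1)).sub
    ((gmat_contDiffAt hRat 0 1).mul (gmat_contDiffAt hRat 1 0))

lemma ginv_entry (ξ' : V2) (α β : Fin 2) :
    ginv R ξ' α β = ((gmat R ξ').det)⁻¹ * (gmat R ξ').adjugate α β := by
  unfold ginv
  rw [Matrix.inv_def, Ring.inverse_eq_inv']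
  simp [Matrix.smul_apply, smul_eq_mul]

lemma adjugate_contDiffAt (hRat : ContDiffAt ℝ (⊤ : ℕ∞) R ξ) (α β : Fin 2) :
    ContDiffAt ℝ (⊤ : ℕ∞) (fun ξ' => (gmat R ξ').adjugate α β) ξ := by
  have h : ∀ ξ' : V2, (gmat R ξ').adjugate α β
      = !![gmat R ξ' 1 1, -(gmat R ξ' 0 1); -(gmat R ξ' 1 0), gmat R ξ' 0 0] α β := by
    intro ξ'; rw [Matrix.adjugate_fin_two]
  simp_rw [h]
  fin_cases α <;> fin_cases β <;>
    simp only [Matrix.cons_val_zero, Matrix.cons_val_one, Matrix.head_cons,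
      Matrix.of_apply, Matrix.cons_val', Matrix.empty_val', Matrix.cons_val_fin_one,
      Matrix.head_fin_const] <;>
    first
      | exact gmat_contDiffAt hRat _ _
      | exact (gmat_contDiffAt hRat _ _).neg

lemma ginv_contDiffAt (hRat : ContDiffAt ℝ (⊤ : ℕ∞) R ξ) (hInd : IndH R ξ) (α β : Fin 2) :
    ContDiffAt ℝ (⊤ : ℕ∞) (fun ξ' => ginv R ξ' α β) ξ := by
  simp_rw [ginv_entry]
  exact ((det_gmat_contDiffAt hRat).inv (det_gmat_ne_zero hInd)).mul
    (adjugate_contDiffAt hRat α β)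

lemma gcon_apply (ξ' : V2) (α : Fin 2) (i : Fin 3) :
    gcon R α ξ' i = ∑ β, ginv R ξ' α β * gcov R β ξ' i := by
  unfold gcon
  rw [Finset.sum_apply]
  exact Finset.sum_congr rfl fun β _ => rfl

lemma gcon_comp_contDiffAt (hRat : ContDiffAt ℝ (⊤ : ℕ∞) R ξ) (hInd : IndH R ξ)
    (α : Fin 2) (i : Fin 3) :
    ContDiffAt ℝ (⊤ : ℕ∞) (fun ξ' => gcon R α ξ' i) ξ := by
  simp_rw [gcon_apply]
  exact ContDiffAt.sum fun β _ =>
    (ginv_contDiffAt hRat hInd α β).mul (gcov_comp_contDiffAt hRat β i)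

lemma Tc_expand (T : V2 → Matrix (Fin 3) (Fin 3) ℝ) (μ ν : Fin 2) (ξ' : V2) :
    dot3 (gcon R μ ξ') ((T ξ').mulVec (gcon R ν ξ'))
      = ∑ i, ∑ j, gcon R μ ξ' i * (T ξ' i j * gcon R ν ξ' j) := by
  simp only [dot3, Matrix.mulVec, dotProduct, Finset.mul_sum]

lemma Tc_contDiffAt (hRat : ContDiffAt ℝ (⊤ : ℕ∞) R ξ) (hInd : IndH R ξ)
    {T : V2 → Matrix (Fin 3) (Fin 3) ℝ}
    (hT : ∀ i j, ContDiffAt ℝ (⊤ : ℕ∞) (fun ξ' => T ξ' i j) ξ) (μ ν : Fin 2) :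
    ContDiffAt ℝ (⊤ : ℕ∞) (fun ξ' => dot3 (gcon R μ ξ') ((T ξ').mulVec (gcon R ν ξ'))) ξ := by
  simp_rw [Tc_expand]
  exact ContDiffAt.sum fun i _ => ContDiffAt.sum fun j _ =>
    (gcon_comp_contDiffAt hRat hInd μ i).mul
      ((hT i j).mul (gcon_comp_contDiffAt hRat hInd ν j))

end Smooth
section Calc
open Matrix
variable {R : V2 → V3} {ξ : V2}

lemma pd2_congr_nhds {E : Type*} [NormedAddCommGroup E] [NormedSpace ℝ E]
    {f g : V2 → E} (h : f =ᶠ[nhds ξ] g) (α : Fin 2) :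
    pd2 f α ξ = pd2 g α ξ := by
  unfold pd2; rw [Filter.EventuallyEq.fderiv_eq h]

lemma pd2_sum {ι : Type*} (s : Finset ι) (f : ι → V2 → ℝ) (α : Fin 2)
    (h : ∀ i ∈ s, DifferentiableAt ℝ (f i) ξ) :
    pd2 (fun x => ∑ i ∈ s, f i x) α ξ = ∑ i ∈ s, pd2 (f i) α ξ := by
  unfold pd2
  rw [fderiv_fun_sum h, ContinuousLinearMap.sum_apply]

lemma pd2_mul {f g : V2 → ℝ} (hf : DifferentiableAt ℝ f ξ)
    (hg : DifferentiableAt ℝ g ξ) (α : Fin 2) :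
    pd2 (fun x => f x * g x) α ξ = pd2 f α ξ * g ξ + f ξ * pd2 g α ξ := by
  unfold pd2
  rw [fderiv_fun_mul hf hg]
  simp only [ContinuousLinearMap.add_apply, ContinuousLinearMap.smul_apply, smul_eq_mul]
  ring

lemma pd2_proj {f : V2 → V3} (hf : DifferentiableAt ℝ f ξ) (α : Fin 2) (i : Fin 3) :
    pd2 (fun x => f x i) α ξ = pd2 f α ξ i := by
  unfold pd2
  have h : (fun x => f x i)
      = (ContinuousLinearMap.proj (R := ℝ) (φ := fun _ : Fin 3 => ℝ) i) ∘ f := rfl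
  rw [h, fderiv_comp ξ (ContinuousLinearMap.proj i).differentiableAt hf,
    ContinuousLinearMap.fderiv]
  rfl

lemma pd2_gcov_eq_snd (hRat : ContDiffAt ℝ (⊤ : ℕ∞) R ξ) (α β : Fin 2) :
    pd2 (gcov R β) α ξ
      = fderiv ℝ (fderiv ℝ R) ξ (Pi.single α 1) (Pi.single β 1) := by
  unfold pd2 gcov pd2
  have h : (fun ξ' => fderiv ℝ R ξ' (Pi.single β 1))
      = (ContinuousLinearMap.apply ℝ V3 (Pi.single β 1)) ∘ (fderiv ℝ R) := rfl
  rw [h, fderiv_comp ξ (ContinuousLinearMap.apply ℝ V3 (Pi.single β 1)).differentiableAt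
    ((hRat.fderiv_right (m := 1) (WithTop.coe_le_coe.mpr le_top)).differentiableAt one_ne_zero),
    ContinuousLinearMap.fderiv]
  rfl

lemma pd2_gcov_symm (hRat : ContDiffAt ℝ (⊤ : ℕ∞) R ξ) (α β : Fin 2) :
    pd2 (gcov R β) α ξ = pd2 (gcov R α) β ξ := by
  rw [pd2_gcov_eq_snd hRat, pd2_gcov_eq_snd hRat]
  exact (hRat.isSymmSndFDerivAt (by rw [minSmoothness_of_isRCLikeNormedField]; exact WithTop.coe_le_coe.mpr le_top)) _ _

end Calc
lemma contract_lemma (a : V3) (g D : Fin 2 → V3) (dt t : Fin 2 → Fin 2 → ℝ) (k : Fin 3) :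
    ∑ i, (∑ μ, ∑ ν, (dt μ ν * (g μ i * g ν k)
        + t μ ν * (D μ i * g ν k + g μ i * D ν k))) * a i
      = ∑ μ, ∑ ν, ((dt μ ν * dot3 a (g μ) + t μ ν * dot3 a (D μ)) * g ν k
        + (t μ ν * dot3 a (g μ)) * D ν k) := by
  simp only [Finset.sum_mul]
  rw [Finset.sum_comm]
  refine Finset.sum_congr rfl fun μ _ => ?_
  rw [Finset.sum_comm]
  refine Finset.sum_congr rfl fun ν _ => ?_
  simp only [dot3, Finset.mul_sum, Finset.sum_mul, ← Finset.sum_add_distrib]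
  refine Finset.sum_congr rfl fun i _ => ?_
  ring

/-- Representation of the surface divergence of a tangential operator-valued
field in curvilinear coordinates (Lemma `lemma_divergence_local_representation`). -/
theorem stmt2
    (U : Set V2) (hU : IsOpen U)
    (R : V2 → V3) (hR : ContDiffOn ℝ (⊤ : ℕ∞) R U)
    (hImm : ∀ ξ ∈ U, LinearIndependent ℝ ![gcov R 0 ξ, gcov R 1 ξ])
    (T : V2 → Matrix (Fin 3) (Fin 3) ℝ)
    (hT : ∀ i j, ContDiffOn ℝ (⊤ : ℕ∞) (fun ξ => T ξ i j) U)
    (hPTP : ∀ ξ ∈ U, Pmat R ξ * T ξ * Pmat R ξ = T ξ)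
    (ξ : V2) (hξ : ξ ∈ U) :
    divGammaMat R T ξ =
      (∑ β, (∑ α,
          (pd2 (fun ξ' => dot3 (gcon R α ξ') ((T ξ').mulVec (gcon R β ξ'))) α ξ
            + ∑ μ, chris R α μ α ξ * dot3 (gcon R μ ξ) ((T ξ).mulVec (gcon R β ξ))
            + ∑ μ, chris R β μ α ξ * dot3 (gcon R α ξ) ((T ξ).mulVec (gcon R μ ξ))))
        • gcov R β ξ)
      + (∑ α, ∑ β, dot3 (gcon R α ξ) ((T ξ).mulVec (gcon R β ξ)) * bcov R α β ξ)
          • nrm R ξ := by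
  have hRat : ContDiffAt ℝ (⊤ : ℕ∞) R ξ := hR.contDiffAt (hU.mem_nhds hξ)
  have hInd : IndH R ξ := hImm ξ hξ
  have hTat : ∀ i j, ContDiffAt ℝ (⊤ : ℕ∞) (fun ξ' => T ξ' i j) ξ :=
    fun i j => (hT i j).contDiffAt (hU.mem_nhds hξ)
  have dtc : ∀ μ ν, DifferentiableAt ℝ
      (fun ξ' => dot3 (gcon R μ ξ') ((T ξ').mulVec (gcon R ν ξ'))) ξ :=
    fun μ ν => (Tc_contDiffAt hRat hInd hTat μ ν).differentiableAt (by simp)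
  have dg : ∀ (μ : Fin 2) (i : Fin 3), DifferentiableAt ℝ (fun ξ' => gcov R μ ξ' i) ξ :=
    fun μ i => (gcov_comp_contDiffAt hRat μ i).differentiableAt (by simp)
  have dgv : ∀ μ : Fin 2, DifferentiableAt ℝ (gcov R μ) ξ :=
    fun μ => (gcov_contDiffAt hRat μ).differentiableAt (by simp)
  -- tangential representation, in a neighborhood
  have hEq : ∀ i j : Fin 3, (fun ξ' => T ξ' i j) =ᶠ[nhds ξ]
      (fun ξ' => ∑ μ, ∑ ν, dot3 (gcon R μ ξ') ((T ξ').mulVec (gcon R ν ξ'))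
        * (gcov R μ ξ' i * gcov R ν ξ' j)) := by
    intro i j
    filter_upwards [hU.mem_nhds hξ] with ξ' h
    have hrep := T_rep (hImm ξ' h) (hPTP ξ' h)
    have h2 := congrFun (congrFun hrep i) j
    rw [Matrix.sum_apply] at h2
    simp only [Matrix.sum_apply, Matrix.smul_apply, outer, Matrix.of_apply,
      smul_eq_mul] at h2
    exact h2
  -- entrywise derivative of T
  have h1 : ∀ (i j : Fin 3) (α : Fin 2), pd2 (fun ξ' => T ξ' i j) α ξ
      = ∑ μ, ∑ ν,
        (pd2 (fun ξ' => dot3 (gcon R μ ξ') ((T ξ').mulVec (gcon R ν ξ'))) α ξ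
            * (gcov R μ ξ i * gcov R ν ξ j)
          + dot3 (gcon R μ ξ) ((T ξ).mulVec (gcon R ν ξ))
            * (pd2 (gcov R μ) α ξ i * gcov R ν ξ j
               + gcov R μ ξ i * pd2 (gcov R ν) α ξ j)) := by
    intro i j α
    rw [pd2_congr_nhds (hEq i j) α,
      pd2_sum _ _ _ (fun μ _ => DifferentiableAt.fun_sum
        (fun ν _ => ((dtc μ ν).fun_mul ((dg μ i).fun_mul (dg ν j)))))]
    refine Finset.sum_congr rfl fun μ _ => ?_
    rw [pd2_sum _ _ _ (fun ν _ => ((dtc μ ν).fun_mul ((dg μ i).fun_mul (dg ν j))))]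
    refine Finset.sum_congr rfl fun ν _ => ?_
    rw [pd2_mul (dtc μ ν) ((dg μ i).fun_mul (dg ν j)),
      pd2_mul (dg μ i) (dg ν j), pd2_proj (dgv μ), pd2_proj (dgv ν)]
  -- per-α componentwise identity
  have h2 : ∀ (α : Fin 2) (k : Fin 3), ((pdMat T α ξ)ᵀ.mulVec (gcon R α ξ)) k
      = ∑ μ, ∑ ν,
        ((pd2 (fun ξ' => dot3 (gcon R μ ξ') ((T ξ').mulVec (gcon R ν ξ'))) α ξ
              * dot3 (gcon R α ξ) (gcov R μ ξ)
            + dot3 (gcon R μ ξ) ((T ξ).mulVec (gcon R ν ξ))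
              * dot3 (gcon R α ξ) (pd2 (gcov R μ) α ξ)) * gcov R ν ξ k
          + (dot3 (gcon R μ ξ) ((T ξ).mulVec (gcon R ν ξ))
              * dot3 (gcon R α ξ) (gcov R μ ξ)) * pd2 (gcov R ν) α ξ k) := by
    intro α k
    have hL : ((pdMat T α ξ)ᵀ.mulVec (gcon R α ξ)) k
        = ∑ i, pd2 (fun ξ' => T ξ' i k) α ξ * gcon R α ξ i := by
      simp only [Matrix.mulVec, dotProduct, Matrix.transpose_apply, pdMat,
        Matrix.of_apply]
    rw [hL, Finset.sum_congr rfl fun i _ => congrArg (· * gcon R α ξ i) (h1 i k α)]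
    exact contract_lemma (gcon R α ξ) (fun μ => gcov R μ ξ)
      (fun μ => pd2 (gcov R μ) α ξ)
      (fun μ ν => pd2 (fun ξ' => dot3 (gcon R μ ξ') ((T ξ').mulVec (gcon R ν ξ'))) α ξ)
      (fun μ ν => dot3 (gcon R μ ξ) ((T ξ).mulVec (gcon R ν ξ))) k
  -- delta relations
  have d00 : dot3 (gcon R 0 ξ) (gcov R 0 ξ) = 1 := by rw [dot3_gcon_gcov hInd]; norm_num
  have d01 : dot3 (gcon R 0 ξ) (gcov R 1 ξ) = 0 := by rw [dot3_gcon_gcov hInd]; norm_num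
  have d10 : dot3 (gcon R 1 ξ) (gcov R 0 ξ) = 0 := by rw [dot3_gcon_gcov hInd]; norm_num
  have d11 : dot3 (gcon R 1 ξ) (gcov R 1 ξ) = 1 := by rw [dot3_gcon_gcov hInd]; norm_num
  -- assemble
  have hdiv : divGammaMat R T ξ = ∑ α, (pdMat T α ξ)ᵀ.mulVec (gcon R α ξ) := rfl
  funext k
  have hLHS : divGammaMat R T ξ k
      = ((pdMat T 0 ξ)ᵀ.mulVec (gcon R 0 ξ)) k + ((pdMat T 1 ξ)ᵀ.mulVec (gcon R 1 ξ)) k := by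
    rw [hdiv, Finset.sum_apply, Fin.sum_univ_two]
  rw [hLHS, h2 0 k, h2 1 k]
  -- frame expansion of the second derivatives, componentwise
  have hframe : ∀ (ν α' : Fin 2), pd2 (gcov R ν) α' ξ k
      = dot3 (gcon R 0 ξ) (pd2 (gcov R ν) α' ξ) * gcov R 0 ξ k
      + dot3 (gcon R 1 ξ) (pd2 (gcov R ν) α' ξ) * gcov R 1 ξ k
      + dot3 (nrm R ξ) (pd2 (gcov R ν) α' ξ) * nrm R ξ k := by
    intro ν α'
    have h := congrFun (frame_decomp hInd (pd2 (gcov R ν) α' ξ)) k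
    rw [Fin.sum_univ_two] at h
    simpa [Pi.add_apply, Pi.smul_apply, smul_eq_mul] using h
  simp only [Fin.sum_univ_two, Pi.add_apply, Pi.smul_apply, Finset.sum_apply, smul_eq_mul]
  rw [d00, d01, d10, d11]
  rw [hframe 0 0, hframe 0 1, hframe 1 0, hframe 1 1]
  simp only [chris, bcov]
  simp only [pd2_gcov_symm hRat 0 1]
  ring
end
end

section
/- For every C¹ vector field u : U → ℝ³ and every extension u^e of u, at each ξ ∈ U the curvilinear covariant derivative equals the Cartesian one: ∇_Γ u (ξ) = P(ξ) (∇̂ u^e(R(ξ))) P(ξ). -/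
noncomputable section

open scoped BigOperators Matrix

lemma jac3_mulVec (f : V3 → V3) (y v : V3) :
    (jac3 f y).mulVec v = fderiv ℝ f y v := by
  have hv : (∑ j, v j • (Pi.single j 1 : V3)) = v := by
    funext i
    simp [Finset.sum_apply, Pi.single_apply, Finset.sum_ite_eq]
  conv_rhs => rw [← hv]
  rw [map_sum]
  funext i
  simp [jac3, Matrix.mulVec, dotProduct, Finset.sum_apply, mul_comm,
    Fin.sum_univ_three]

lemma outer_mulVec_left (M : Matrix (Fin 3) (Fin 3) ℝ) (a b : V3) :
    outer (M.mulVec a) b = M * outer a b := by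
  ext i j
  simp [outer, Matrix.mul_apply, Matrix.mulVec, dotProduct, Finset.sum_mul, mul_assoc,
    Fin.sum_univ_three]
  ring

set_option maxHeartbeats 1600000 in
lemma lagrange_outer (v w : V3) (i j : Fin 3) :
    v i * (dot3 w w * v j - dot3 v w * w j) + w i * (dot3 v v * w j - dot3 v w * v j)
      = (if i = j then (1:ℝ) else 0) * dot3 (crossProduct v w) (crossProduct v w)
        - crossProduct v w i * crossProduct v w j := by
  fin_cases i <;> fin_cases j <;>
    (simp [dot3, cross_apply, Fin.sum_univ_three]; ring)

set_option maxHeartbeats 1600000 in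
lemma sum_outer_eq_Pmat (R : V2 → V3) (ξ : V2)
    (h : LinearIndependent ℝ ![gcov R 0 ξ, gcov R 1 ξ]) :
    ∑ α, outer (gcov R α ξ) (gcon R α ξ) = Pmat R ξ := by
  set v := gcov R 0 ξ with hv
  set w := gcov R 1 ξ with hw
  set c : V3 := crossProduct v w with hc
  have hc0 : c ≠ 0 := crossProduct_ne_zero_iff_linearIndependent.mpr h
  have hd : dot3 c c ≠ 0 := by
    intro h0
    apply hc0
    funext i
    have hnn : ∀ j ∈ Finset.univ, (0:ℝ) ≤ c j * c j := fun j _ => mul_self_nonneg _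
    have := (Finset.sum_eq_zero_iff_of_nonneg hnn).mp h0 i (Finset.mem_univ i)
    have := mul_self_eq_zero.mp this
    simpa using this
  have hdnn : 0 ≤ dot3 c c := Finset.sum_nonneg fun j _ => mul_self_nonneg _
  have hdet : (gmat R ξ).det = dot3 c c := by
    rw [Matrix.det_fin_two]
    show dot3 v v * dot3 w w - dot3 v w * dot3 w v = _
    simp only [hc, dot3, Fin.sum_univ_three, cross_apply]
    simp [Matrix.cons_val_zero, Matrix.cons_val_one]
    ring
  have hinv : ginv R ξ = (dot3 c c)⁻¹ •
      Matrix.of ![![dot3 w w, -(dot3 v w)], ![-(dot3 v w), dot3 v v]] := by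
    rw [ginv, Matrix.inv_def, Matrix.adjugate_fin_two, hdet, Ring.inverse_eq_inv']
    congr 1
    ext α β
    fin_cases α <;> fin_cases β <;>
      simp [gmat, dot3, ← hv, ← hw, Fin.sum_univ_three, mul_comm]
  have hnorm : ∀ i j : Fin 3, nrm R ξ i * nrm R ξ j = (dot3 c c)⁻¹ * (c i * c j) := by
    intro i j
    have h1 : norm3 c * norm3 c = dot3 c c := Real.mul_self_sqrt hdnn
    have : nrm R ξ = (norm3 c)⁻¹ • c := rfl
    rw [this]
    simp only [Pi.smul_apply, smul_eq_mul]
    rw [← h1]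
    field_simp
  ext i j
  simp only [Finset.sum_apply, Fin.sum_univ_two, outer, gcon, Matrix.of_apply, Pmat,
    Matrix.sub_apply, Matrix.one_apply, Matrix.add_apply, Pi.add_apply, Pi.smul_apply,
    smul_eq_mul, hnorm, hinv, Matrix.smul_apply]
  simp only [Matrix.of_apply, Matrix.cons_val', Matrix.cons_val_zero, Matrix.cons_val_one,
    Matrix.head_cons, Matrix.empty_val', Matrix.cons_val_fin_one, Matrix.head_fin_const,
    ← hv, ← hw, smul_eq_mul]
  have hvw : dot3 w v = dot3 v w := by simp [dot3, mul_comm]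
  have key := lagrange_outer v w i j
  rw [← hc] at key
  calc v i * ((dot3 c c)⁻¹ * dot3 w w * v j + (dot3 c c)⁻¹ * -dot3 v w * w j) +
        w i * ((dot3 c c)⁻¹ * -dot3 v w * v j + (dot3 c c)⁻¹ * dot3 v v * w j)
      = (dot3 c c)⁻¹ * (v i * (dot3 w w * v j - dot3 v w * w j) +
          w i * (dot3 v v * w j - dot3 v w * v j)) := by ring
    _ = (dot3 c c)⁻¹ * ((if i = j then (1:ℝ) else 0) * dot3 c c - c i * c j) := by rw [key]
    _ = (if i = j then (1:ℝ) else 0) - (dot3 c c)⁻¹ * (c i * c j) := by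
        field_simp


/-- The curvilinear covariant derivative of a vector field equals the Cartesian one
(Theorem `theorem_comparison_local_cartesian`, second identity). -/
theorem stmt4
    (U : Set V2) (hU : IsOpen U)
    (R : V2 → V3) (hR : ContDiffOn ℝ (⊤ : ℕ∞) R U)
    (hImm : ∀ ξ ∈ U, LinearIndependent ℝ ![gcov R 0 ξ, gcov R 1 ξ])
    (u : V2 → V3) (hu : ContDiffOn ℝ 1 u U)
    (W : Set V3) (hW : IsOpen W) (hRW : ∀ ξ ∈ U, R ξ ∈ W)
    (ue : V3 → V3) (hue : ContDiffOn ℝ 1 ue W)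
    (hext : ∀ ξ ∈ U, ue (R ξ) = u ξ)
    (ξ : V2) (hξ : ξ ∈ U) :
    covDer R u ξ = Pmat R ξ * jac3 ue (R ξ) * Pmat R ξ := by
  have hRd : DifferentiableAt ℝ R ξ :=
    (hR.contDiffAt (hU.mem_nhds hξ)).differentiableAt (by simp)
  have hued : DifferentiableAt ℝ ue (R ξ) :=
    (hue.contDiffAt (hW.mem_nhds (hRW ξ hξ))).differentiableAt one_ne_zero
  have heq : u =ᶠ[nhds ξ] (ue ∘ R) :=
    Filter.eventuallyEq_of_mem (hU.mem_nhds hξ) fun ζ hζ => (hext ζ hζ).symm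
  have hch : ∀ α, pd2 u α ξ = (jac3 ue (R ξ)).mulVec (gcov R α ξ) := by
    intro α
    rw [jac3_mulVec]
    show fderiv ℝ u ξ (Pi.single α 1) = _
    rw [heq.fderiv_eq, fderiv_comp ξ hued hRd]
    rfl
  have h1 : covDer R u ξ = (Pmat R ξ * jac3 ue (R ξ)) *
      ∑ α, outer (gcov R α ξ) (gcon R α ξ) := by
    rw [Finset.mul_sum]
    unfold covDer
    refine Finset.sum_congr rfl fun α _ => ?_
    rw [hch α, Matrix.mulVec_mulVec, outer_mulVec_left]
  rw [h1, sum_outer_eq_Pmat R ξ (hImm ξ hξ)]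
end
end
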